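/- arXiv:2603.29824 — 2 statements merged into one kernel-verified Lean document; each statement's English description precedes it below -/
import Mathlib

section
/- Let F ∈ ℝ^{m×n}, and let P ∈ ℝ^{m×m} and Q ∈ ℝ^{n×n} be orthogonal projection matrices (symmetric idempotents) with rank(P) ≤ r and rank(Q) ≤ r. Then ‖(I_m − P) F (I_n − Q)‖_F ≥ ( Σ_{i ≥ 2r+1} s_i(F)² )^{1/2}, where s_1(F) ≥ s_2(F) ≥ … are the singular values of F. -/
open Matrix

/-- Frobenius norm of a matrix. -/
noncomputable def frobNorm {ι κ : Type*} [Fintype ι] [Fintype κ] (A : Matrix ι κ ℝ) : ℝ :=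
  Real.sqrt (∑ i, ∑ j, A i j ^ 2)

/-! Let `W` have orthonormal columns spanning `K = ker Q ∩ ker (P F)`, of dimension `d ≥ n - 2r`.
Then `(1 - P) F (1 - Q) W = F W`, and right multiplication by `W` does not increase the Frobenius
norm, so `‖(1 - P) F (1 - Q)‖_F ≥ ‖F W‖_F = ‖Σ Vᵀ W‖_F`. Writing `R` for the orthogonal
projection `(Vᵀ W) (Vᵀ W)ᵀ`, of trace `d`, we get `‖Σ Vᵀ W‖_F² = ∑ₖ sₖ² Rₖₖ` with weights
`Rₖₖ ∈ [0, 1]` summing to at least `n - 2r`; as `s` decreases, such a weighted sum is at least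
`∑_{k ≥ 2r} sₖ²`. -/

open Finset Module

theorem Finset.sum_le_sum_mul_of_card_le {ι : Type*} {s S : Finset ι} (hSs : S ⊆ s)
    {t ρ : ι → ℝ} {τ : ℝ} (hτ : 0 ≤ τ) (htS : ∀ k ∈ S, t k ≤ τ) (hts : ∀ k ∈ s, k ∉ S → τ ≤ t k)
    (hρ0 : ∀ k ∈ s, 0 ≤ ρ k) (hρ1 : ∀ k ∈ s, ρ k ≤ 1) (hcard : (#S : ℝ) ≤ ∑ k ∈ s, ρ k) :
    ∑ k ∈ S, t k ≤ ∑ k ∈ s, t k * ρ k := by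
  classical
  set χ : ι → ℝ := fun k => if k ∈ S then 1 else 0
  have htχ : ∑ k ∈ s, t k * χ k = ∑ k ∈ S, t k := by
    simp only [χ, mul_ite, mul_one, mul_zero, sum_ite_mem, inter_eq_right.2 hSs]
  have hχ : ∑ k ∈ s, χ k = #S := by
    simp only [χ, sum_ite_mem, inter_eq_right.2 hSs, sum_const, nsmul_one]
  have hterm : ∀ k ∈ s, 0 ≤ (t k - τ) * (ρ k - χ k) := by
    intro k hk
    by_cases hkS : k ∈ S
    · simp only [χ, hkS, if_true]
      exact mul_nonneg_of_nonpos_of_nonpos (by linarith [htS k hkS]) (by linarith [hρ1 k hk])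
    · simp only [χ, hkS, if_false, sub_zero]
      exact mul_nonneg (by linarith [hts k hk hkS]) (hρ0 k hk)
  have hexpand : ∑ k ∈ s, (t k - τ) * (ρ k - χ k)
      = ∑ k ∈ s, t k * ρ k - ∑ k ∈ s, t k * χ k - τ * (∑ k ∈ s, ρ k - ∑ k ∈ s, χ k) := by
    simp only [mul_sub, sub_mul, sum_sub_distrib, mul_sum]
    ring
  nlinarith [sum_nonneg hterm, mul_le_mul_of_nonneg_left hcard hτ]

theorem Matrix.IsSymm.diag_mem_Icc_of_isIdempotentElem {ι : Type*} [Fintype ι]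
    {R : Matrix ι ι ℝ} (hR : R.IsSymm) (hRR : IsIdempotentElem R) (k : ι) :
    R k k ∈ Set.Icc 0 1 := by
  have hkk : R k k = ∑ l, R k l ^ 2 := by
    conv_lhs => rw [← hRR.eq]
    simp only [mul_apply, hR.apply, sq]
  have hsq : R k k ^ 2 ≤ R k k := hkk ▸ single_le_sum (fun l _ => sq_nonneg (R k l)) (mem_univ k)
  have hnonneg : 0 ≤ R k k := hkk ▸ sum_nonneg fun l _ => sq_nonneg (R k l)
  exact ⟨hnonneg, by nlinarith⟩

theorem isIdempotentElem_mul_transpose_of_transpose_mul_eq_one {ι κ : Type*} [Fintype ι]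
    [DecidableEq ι] [Fintype κ] [DecidableEq κ] {W : Matrix ι κ ℝ} (hW : Wᵀ * W = 1) :
    IsIdempotentElem (W * Wᵀ) := by
  rw [IsIdempotentElem, Matrix.mul_assoc, ← Matrix.mul_assoc Wᵀ, hW, Matrix.one_mul]

section frobNorm

variable {ι κ μ : Type*} [Fintype ι] [Fintype κ] [Fintype μ]

theorem trace_transpose_mul_self (A : Matrix ι κ ℝ) : (Aᵀ * A).trace = ∑ i, ∑ j, A i j ^ 2 := by
  simp only [trace, Matrix.diag, mul_apply, transpose_apply, sq]
  exact sum_comm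

theorem frobNorm_eq_sqrt_trace (A : Matrix ι κ ℝ) : frobNorm A = √(Aᵀ * A).trace := by
  rw [frobNorm, trace_transpose_mul_self]

theorem trace_transpose_mul_self_nonneg (A : Matrix ι κ ℝ) : 0 ≤ (Aᵀ * A).trace := by
  rw [trace_transpose_mul_self]
  positivity

theorem trace_transpose_mul_self_mul (X : Matrix ι κ ℝ) (W : Matrix κ μ ℝ) :
    ((X * W)ᵀ * (X * W)).trace = (Xᵀ * X * (W * Wᵀ)).trace := by
  rw [transpose_mul, Matrix.mul_assoc, trace_mul_comm]
  simp only [Matrix.mul_assoc]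

theorem frobNorm_mul_of_transpose_mul_self_eq_one [DecidableEq ι] {U : Matrix ι ι ℝ}
    (hU : Uᵀ * U = 1) (X : Matrix ι κ ℝ) : frobNorm (U * X) = frobNorm X := by
  rw [frobNorm_eq_sqrt_trace, frobNorm_eq_sqrt_trace, transpose_mul, Matrix.mul_assoc,
    ← Matrix.mul_assoc Uᵀ, hU, Matrix.one_mul]

theorem frobNorm_mul_le_of_transpose_mul_self_eq_one [DecidableEq κ] [DecidableEq μ]
    {W : Matrix κ μ ℝ} (hW : Wᵀ * W = 1) (X : Matrix ι κ ℝ) : frobNorm (X * W) ≤ frobNorm X := by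
  set R := W * Wᵀ
  have hR : IsIdempotentElem R := isIdempotentElem_mul_transpose_of_transpose_mul_eq_one hW
  have hY : (1 - R) * (1 - R)ᵀ = 1 - R := by
    rw [transpose_sub, transpose_one, transpose_mul, transpose_transpose]
    exact hR.one_sub.eq
  -- Pythagoras: `‖X (1 - R)‖_F² = ‖X‖_F² - ‖X W‖_F² ≥ 0`
  have hcompl := trace_transpose_mul_self_nonneg (X * (1 - R))
  rw [trace_transpose_mul_self_mul, hY, Matrix.mul_sub, Matrix.mul_one, trace_sub,
    ← trace_transpose_mul_self_mul] at hcompl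
  rw [frobNorm_eq_sqrt_trace, frobNorm_eq_sqrt_trace]
  exact Real.sqrt_le_sqrt (by linarith)

end frobNorm

theorem Submodule.exists_orthonormal_cols_mem {n : Type*} [Fintype n]
    (K : Submodule ℝ (n → ℝ)) :
    ∃ W : Matrix n (Fin (finrank ℝ K)) ℝ, Wᵀ * W = 1 ∧ ∀ j, Wᵀ j ∈ K := by
  classical
  let e := WithLp.linearEquiv 2 ℝ (n → ℝ)
  let K' := K.map e.symm.toLinearMap
  have hK : finrank ℝ K' = finrank ℝ K := LinearEquiv.finrank_map_eq e.symm K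
  let b := (stdOrthonormalBasis ℝ K').reindex (finCongr hK)
  refine ⟨Matrix.of fun k j => (b j : EuclideanSpace ℝ n) k, ?_, fun j => ?_⟩
  · ext i j
    have := orthonormal_iff_ite.1 b.orthonormal i j
    rw [Submodule.coe_inner, PiLp.inner_apply] at this
    rw [mul_apply, one_apply, ← this]
    simp only [transpose_apply, of_apply, RCLike.inner_apply, conj_trivial]
    exact sum_congr rfl fun _ _ => mul_comm _ _
  · obtain ⟨x, hx, hxb⟩ := Submodule.mem_map.1 (b j).2
    convert hx
    ext k
    simp [← hxb, e]

theorem card_le_finrank_ker_inf_add_rank_add_rank {K ι κ ν : Type*} [Field K] [Fintype ι]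
    [Fintype κ] [Fintype ν] (A : Matrix ι ν K) (B : Matrix κ ν K) :
    Fintype.card ν ≤ finrank K ↥(LinearMap.ker A.mulVecLin ⊓ LinearMap.ker B.mulVecLin)
      + A.rank + B.rank := by
  have hA := A.mulVecLin.finrank_range_add_finrank_ker
  have hB := B.mulVecLin.finrank_range_add_finrank_ker
  have hsup := Submodule.finrank_sup_add_finrank_inf_eq
    (LinearMap.ker A.mulVecLin) (LinearMap.ker B.mulVecLin)
  have hle := Submodule.finrank_le (LinearMap.ker A.mulVecLin ⊔ LinearMap.ker B.mulVecLin)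
  rw [finrank_fintype_fun_eq_card] at hA hB hle
  rw [Matrix.rank, Matrix.rank]
  omega

theorem exists_orthonormal_cols_mul_eq_zero {ι κ ν : Type*} [Fintype ι] [Fintype κ] [Fintype ν]
    (A : Matrix ι ν ℝ) (B : Matrix κ ν ℝ) :
    ∃ (d : ℕ) (W : Matrix ν (Fin d) ℝ), Wᵀ * W = 1 ∧ A * W = 0 ∧ B * W = 0 ∧
      Fintype.card ν ≤ d + A.rank + B.rank := by
  obtain ⟨W, hW, hWK⟩ := Submodule.exists_orthonormal_cols_mem
    (LinearMap.ker A.mulVecLin ⊓ LinearMap.ker B.mulVecLin)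
  refine ⟨_, W, hW, ?_, ?_, card_le_finrank_ker_inf_add_rank_add_rank A B⟩
  · ext i j
    exact congrFun (hWK j).1 i
  · ext i j
    exact congrFun (hWK j).2 i

def rectDiag (m n : ℕ) (s : ℕ → ℝ) : Matrix (Fin m) (Fin n) ℝ :=
  Matrix.of fun i j => if (i : ℕ) = (j : ℕ) then s i else 0

theorem rectDiag_transpose_mul_self {m n : ℕ} (s : ℕ → ℝ) :
    (rectDiag m n s)ᵀ * rectDiag m n s
      = diagonal fun k : Fin n => if (k : ℕ) < m then s k ^ 2 else 0 := by
  refine Matrix.ext fun k l => ?_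
  simp only [rectDiag, mul_apply, transpose_apply, of_apply, diagonal_apply]
  simp only [Fin.sum_univ_eq_sum_range
    (fun i => (if i = (k : ℕ) then s i else 0) * (if i = (l : ℕ) then s i else 0)) m]
  by_cases hkl : k = l
  · subst hkl
    simp [← sq, sum_ite_eq']
  · have : (k : ℕ) ≠ l := fun h => hkl (Fin.ext h)
    rw [if_neg hkl]
    refine sum_eq_zero fun i _ => ?_
    split_ifs <;> simp_all

theorem sqrt_sum_Ico_le_frobNorm_rectDiag_mul {m n d c : ℕ} {s : ℕ → ℝ} (hs : Antitone s)
    (hs0 : ∀ i, 0 ≤ s i) {W : Matrix (Fin n) (Fin d) ℝ} (hW : Wᵀ * W = 1) (hc : n ≤ d + c) :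
    √(∑ i ∈ Ico c (min m n), s i ^ 2) ≤ frobNorm (rectDiag m n s * W) := by
  rw [frobNorm_eq_sqrt_trace, trace_transpose_mul_self_mul, rectDiag_transpose_mul_self]
  refine Real.sqrt_le_sqrt ?_
  set R := W * Wᵀ
  set t : ℕ → ℝ := fun k => if k < m then s k ^ 2 else 0
  set ρ : ℕ → ℝ := fun k => if h : k < n then R ⟨k, h⟩ ⟨k, h⟩ else 0
  have ht : Antitone t := by
    intro i j hij
    simp only [t]
    split_ifs
    · exact pow_le_pow_left₀ (hs0 j) (hs hij) 2
    · omega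
    · positivity
    · rfl
  have hρ : ∀ k, ρ k ∈ Set.Icc 0 1 := by
    intro k
    simp only [ρ]
    split_ifs
    · exact IsSymm.diag_mem_Icc_of_isIdempotentElem (by simp [IsSymm, transpose_mul])
        (isIdempotentElem_mul_transpose_of_transpose_mul_eq_one hW) _
    · simp
  have hρsum : ∑ k ∈ range n, ρ k = d := calc
    ∑ k ∈ range n, ρ k = R.trace := by rw [← Fin.sum_univ_eq_sum_range]; simp [ρ, trace]
    _ = d := by rw [trace_mul_comm, hW, trace_one, Fintype.card_fin]
  have htrace : (diagonal (fun k : Fin n => t k) * R).trace = ∑ k ∈ range n, t k * ρ k := by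
    rw [← Fin.sum_univ_eq_sum_range]
    simp [trace, diagonal_mul, ρ]
  have htail : ∑ i ∈ Ico c (min m n), s i ^ 2 = ∑ k ∈ Ico c n, t k := by
    rw [min_comm, ← Ico_filter_lt, sum_filter]
  rw [htail, htrace]
  have htc : 0 ≤ t c := by simp only [t]; split_ifs <;> positivity
  refine sum_le_sum_mul_of_card_le (τ := t c) (fun k hk => mem_range.2 (mem_Ico.1 hk).2) htc
    (fun k hk => ht (mem_Ico.1 hk).1) (fun k hk hkS => ht ?_) (fun k _ => (hρ k).1)
    (fun k _ => (hρ k).2) ?_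
  · simp only [mem_range, mem_Ico, not_and, not_lt] at hk hkS
    omega
  · rw [hρsum, Nat.card_Ico]; exact_mod_cast (by omega : n - c ≤ d)

theorem doubly_projected_tail_bound_general {m n r : ℕ}
    (F : Matrix (Fin m) (Fin n) ℝ)
    (P : Matrix (Fin m) (Fin m) ℝ) (Q : Matrix (Fin n) (Fin n) ℝ)
    (hPrank : P.rank ≤ r)
    (hQrank : Q.rank ≤ r)
    -- a full SVD of `F` with ordered singular values `s`
    (UF : Matrix (Fin m) (Fin m) ℝ) (VF : Matrix (Fin n) (Fin n) ℝ)
    (s : ℕ → ℝ)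
    (hUF : UFᵀ * UF = 1) (hVF : VFᵀ * VF = 1)
    (hs_anti : ∀ i j, i ≤ j → s j ≤ s i) (hs_nonneg : ∀ i, 0 ≤ s i)
    (hFsvd : F = UF * (Matrix.of fun (i : Fin m) (j : Fin n) =>
                  if (i : ℕ) = (j : ℕ) then s i else 0) * VFᵀ) :
    Real.sqrt (∑ i ∈ Finset.Ico (2 * r) (min m n), s i ^ 2)
      ≤ frobNorm ((1 - P) * F * (1 - Q)) := by
  have hF : F = UF * rectDiag m n s * VFᵀ := hFsvd
  obtain ⟨d, W, hW, hQW, hPFW, hdim⟩ := exists_orthonormal_cols_mul_eq_zero Q (P * F)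
  have hPF := (rank_mul_le_left P F).trans hPrank
  rw [Fintype.card_fin] at hdim
  have hVW : (VFᵀ * W)ᵀ * (VFᵀ * W) = 1 := by
    rw [transpose_mul, transpose_transpose, Matrix.mul_assoc, ← Matrix.mul_assoc VF,
      mul_eq_one_comm.1 hVF, Matrix.one_mul, hW]
  calc √(∑ i ∈ Ico (2 * r) (min m n), s i ^ 2)
      ≤ frobNorm (rectDiag m n s * (VFᵀ * W)) :=
        sqrt_sum_Ico_le_frobNorm_rectDiag_mul hs_anti hs_nonneg hVW (by omega)
    _ = frobNorm (F * W) := by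
        rw [hF, Matrix.mul_assoc, Matrix.mul_assoc, frobNorm_mul_of_transpose_mul_self_eq_one hUF]
    _ = frobNorm ((1 - P) * F * (1 - Q) * W) := by
        rw [Matrix.mul_assoc _ (1 - Q), Matrix.sub_mul 1 Q W, hQW, Matrix.one_mul, sub_zero,
          Matrix.sub_mul, Matrix.sub_mul, Matrix.one_mul, hPFW, sub_zero]
    _ ≤ frobNorm ((1 - P) * F * (1 - Q)) := frobNorm_mul_le_of_transpose_mul_self_eq_one hW _

/-- If `P`, `Q` are orthogonal projections (symmetric idempotents) of rank at most `r`,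
then `‖(I − P) F (I − Q)‖_F ≥ (Σ_{i ≥ 2r+1} s_i(F)²)^{1/2}`, where `s` lists the
singular values of `F` in decreasing order (given here by a full SVD of `F`). -/
theorem doubly_projected_tail_bound {m n r : ℕ}
    (F : Matrix (Fin m) (Fin n) ℝ)
    (P : Matrix (Fin m) (Fin m) ℝ) (Q : Matrix (Fin n) (Fin n) ℝ)
    (hPsymm : Pᵀ = P) (hPidem : P * P = P) (hPrank : P.rank ≤ r)
    (hQsymm : Qᵀ = Q) (hQidem : Q * Q = Q) (hQrank : Q.rank ≤ r)
    -- a full SVD of `F` with ordered singular values `s`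
    (UF : Matrix (Fin m) (Fin m) ℝ) (VF : Matrix (Fin n) (Fin n) ℝ)
    (s : ℕ → ℝ)
    (hUF : UFᵀ * UF = 1) (hVF : VFᵀ * VF = 1)
    (hs_anti : ∀ i j, i ≤ j → s j ≤ s i) (hs_nonneg : ∀ i, 0 ≤ s i)
    (hFsvd : F = UF * (Matrix.of fun (i : Fin m) (j : Fin n) =>
                  if (i : ℕ) = (j : ℕ) then s i else 0) * VFᵀ) :
    Real.sqrt (∑ i ∈ Finset.Ico (2 * r) (min m n), s i ^ 2)
      ≤ frobNorm ((1 - P) * F * (1 - Q)) :=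
  doubly_projected_tail_bound_general F P Q hPrank hQrank UF VF s hUF hVF hs_anti hs_nonneg hFsvd
end

section
/- Assume J ∈ ℝ^{n×(d_in·d_out)} satisfies JᵀJ = S ⊗ T with thin spectral decompositions S = U_S D_S U_Sᵀ (rank r_s), T = U_T D_T U_Tᵀ (rank r_t). Let z ∈ ℝⁿ, let G ∈ ℝ^{d_out×d_in} satisfy vec(G) = −Jᵀz, and let F = D_T^{−1/2} U_Tᵀ G U_S D_S^{−1/2} have rank at least r with s_r(F) > 0. Let L_r = U_T D_T^{−1/2} U_{F,r}, R_r = U_S D_S^{−1/2} V_{F,r} (top-r singular modes of F), M = −Π_{L_r} G Π_{R_r} ≠ 0 with any thin SVD M = U_M D_M V_Mᵀ, and for γ > 0 set A₀ᵀ = (d_out^{1/4}/(γ‖M‖₂^{1/2})) V_{M,r} D_{M,r}^{1/2} and B₀ = (d_out^{1/4}/(γ‖M‖₂^{1/2})) U_{M,r} D_{M,r}^{1/2}, and H = [I ⊗ B₀ | A₀ᵀ ⊗ I]. Then ‖(JJ† − (JH)(JH)†) z‖₂ ≤ ( Σ_{i ≥ r+1} s_i(F)² )^{1/2}. -/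
/-!
Since col(JH) ⊆ col(J), the vector (JJ† − (JH)(JH)†)z is orthogonal to col(JH), so its norm
is at most ‖J(J†z − Hu)‖ for every u. Under K-FAC, JᵀJ = WWᵀ with
W = U_S D_S^{1/2} ⊗ U_T D_T^{1/2}, so ‖Jv‖ = ‖Wᵀv‖, and WWᵀJ†z = Jᵀz = −vec G forces
WᵀJ†z = −vec F. The modes L, R satisfy LᵀGR = diag(s_1, …, s_r), which is invertible; hence
M = −Π_L G Π_R has the column space of L, its thin SVD has exactly r modes, and B₀ spans
col(L). Taking u = (vec A, 0) with B₀A = −L Σ_r Rᵀ gives WᵀHu = −vec F_r for the rank-r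
truncation F_r of F, so the gap is at most ‖F − F_r‖_F.
-/

open Matrix
open scoped Kronecker

/-- The four Penrose conditions: `Ap` is the Moore–Penrose pseudoinverse of `A`. -/
def IsMPInv {m n : Type*} [Fintype m] [Fintype n]
    (A : Matrix m n ℝ) (Ap : Matrix n m ℝ) : Prop :=
  A * Ap * A = A ∧ Ap * A * Ap = Ap ∧ (A * Ap)ᵀ = A * Ap ∧ (Ap * A)ᵀ = Ap * A

/-- Euclidean norm of a vector. -/
noncomputable def euclidNorm {ι : Type*} [Fintype ι] (v : ι → ℝ) : ℝ :=
  Real.sqrt (∑ i, v i ^ 2)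

/-- Spectral norm (operator 2-norm) of a matrix. -/
noncomputable def specNorm {ι κ : Type*} [Fintype ι] [Fintype κ] (A : Matrix ι κ ℝ) : ℝ :=
  sSup {c | ∃ x : κ → ℝ, euclidNorm x = 1 ∧ c = euclidNorm (A.mulVec x)}

section EuclidNorm

variable {ι : Type*} [Fintype ι]

lemma euclidNorm_eq_sqrt_dotProduct (v : ι → ℝ) : euclidNorm v = √(v ⬝ᵥ v) := by
  simp [euclidNorm, dotProduct, sq]

lemma euclidNorm_eq_norm_toLp (v : ι → ℝ) :
    euclidNorm v = ‖(WithLp.toLp 2 v : EuclideanSpace ℝ ι)‖ := by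
  simp [euclidNorm, EuclideanSpace.norm_eq]

lemma euclidNorm_neg (v : ι → ℝ) : euclidNorm (-v) = euclidNorm v := by
  simp [euclidNorm]

lemma euclidNorm_le_euclidNorm_add {a b : ι → ℝ} (h : a ⬝ᵥ b = 0) :
    euclidNorm a ≤ euclidNorm (a + b) := by
  have hab : (a + b) ⬝ᵥ (a + b) = a ⬝ᵥ a + b ⬝ᵥ b := by
    simp [add_dotProduct, dotProduct_add, dotProduct_comm b a, h]
  rw [euclidNorm_eq_sqrt_dotProduct, euclidNorm_eq_sqrt_dotProduct, hab]
  gcongr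
  simpa using dotProduct_self_star_nonneg b

lemma mulVec_dotProduct_mulVec_self {m : Type*} [Fintype m] (A : Matrix m ι ℝ) (v : ι → ℝ) :
    (A *ᵥ v) ⬝ᵥ (A *ᵥ v) = v ⬝ᵥ ((Aᵀ * A) *ᵥ v) := by
  rw [← mulVec_mulVec, dotProduct_mulVec, mulVec_transpose, dotProduct_comm]

lemma euclidNorm_mulVec_eq_of_transpose_mul_self_eq {m κ : Type*} [Fintype m] [Fintype κ]
    {J : Matrix m ι ℝ} {W : Matrix ι κ ℝ} (h : Jᵀ * J = W * Wᵀ) (v : ι → ℝ) :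
    euclidNorm (J *ᵥ v) = euclidNorm (Wᵀ *ᵥ v) := by
  rw [euclidNorm_eq_sqrt_dotProduct, euclidNorm_eq_sqrt_dotProduct,
    mulVec_dotProduct_mulVec_self, mulVec_dotProduct_mulVec_self, h, transpose_transpose]

lemma euclidNorm_vec {m n : Type*} [Fintype m] [Fintype n] (A : Matrix m n ℝ) :
    euclidNorm (vec A) = √(Aᵀ * A).trace := by
  rw [euclidNorm_eq_sqrt_dotProduct, vec_dotProduct_vec]

lemma euclidNorm_vec_mul_mul_transpose {m m' n n' : Type*} [Fintype m] [Fintype m']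
    [Fintype n] [Fintype n'] [DecidableEq m'] [DecidableEq n'] {U : Matrix m m' ℝ}
    {V : Matrix n n' ℝ} (hU : Uᵀ * U = 1) (hV : Vᵀ * V = 1) (A : Matrix m' n' ℝ) :
    euclidNorm (vec (U * A * Vᵀ)) = euclidNorm (vec A) := by
  rw [euclidNorm_vec, euclidNorm_vec]
  congr 1
  calc ((U * A * Vᵀ)ᵀ * (U * A * Vᵀ)).trace = (V * (Aᵀ * (Uᵀ * U) * A * Vᵀ)).trace := by
        simp only [transpose_mul, transpose_transpose, Matrix.mul_assoc]
    _ = (Aᵀ * A).trace := by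
        rw [trace_mul_comm, Matrix.mul_assoc, hV, Matrix.mul_one, hU, Matrix.mul_one]

end EuclidNorm

open scoped Matrix.Norms.L2Operator in
lemma specNorm_pos {ι κ : Type*} [Fintype ι] [Fintype κ] {A : Matrix ι κ ℝ} (hA : A ≠ 0) :
    0 < specNorm A := by
  classical
  obtain ⟨i, j, hij⟩ : ∃ i j, A i j ≠ 0 := by
    by_contra! h
    exact hA (Matrix.ext h)
  have hbdd : BddAbove {c | ∃ x : κ → ℝ, euclidNorm x = 1 ∧ c = euclidNorm (A *ᵥ x)} := by
    refine ⟨‖A‖, ?_⟩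
    rintro c ⟨x, hx, rfl⟩
    rw [euclidNorm_eq_norm_toLp] at hx ⊢
    simpa [hx] using A.l2_opNorm_mulVec (WithLp.toLp 2 x)
  refine lt_of_lt_of_le ?_
    (le_csSup hbdd ⟨Pi.single j 1, by simp [euclidNorm_eq_norm_toLp], rfl⟩)
  rw [euclidNorm_eq_norm_toLp, norm_pos_iff, mulVec_single_one]
  simpa [funext_iff] using ⟨i, hij⟩

namespace IsMPInv

variable {m n : Type*} [Fintype m] [Fintype n] {A : Matrix m n ℝ} {Ap : Matrix n m ℝ}

lemma transpose_mul_self_mul (h : IsMPInv A Ap) : Aᵀ * A * Ap = Aᵀ := by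
  conv_rhs => rw [← h.1, transpose_mul, h.2.2.1]
  rw [Matrix.mul_assoc]

lemma euclidNorm_mulVec_sub_le {k : Type*} [Fintype k] {H : Matrix n k ℝ} {Kp : Matrix k m ℝ}
    (hA : IsMPInv A Ap) (hK : IsMPInv (A * H) Kp) (z : m → ℝ) (u : k → ℝ) :
    euclidNorm ((A * Ap - A * H * Kp) *ᵥ z) ≤ euclidNorm (A *ᵥ (Ap *ᵥ z - H *ᵥ u)) := by
  set P := A * Ap - A * H * Kp
  have hPK : (A * H)ᵀ * P = 0 := by
    rw [Matrix.mul_sub, ← Matrix.mul_assoc _ (A * H), hK.transpose_mul_self_mul, transpose_mul,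
      Matrix.mul_assoc Hᵀ, ← Matrix.mul_assoc Aᵀ, hA.transpose_mul_self_mul, sub_self]
  have horth : (P *ᵥ z) ⬝ᵥ ((A * H) *ᵥ (Kp *ᵥ z - u)) = 0 := by
    rw [dotProduct_mulVec, ← mulVec_transpose, mulVec_mulVec, hPK, zero_mulVec, zero_dotProduct]
  have hsum : P *ᵥ z + (A * H) *ᵥ (Kp *ᵥ z - u) = A *ᵥ (Ap *ᵥ z - H *ᵥ u) := by
    simp only [P, sub_mulVec, mulVec_sub, mulVec_mulVec, Matrix.mul_assoc]
    abel
  exact hsum ▸ euclidNorm_le_euclidNorm_add horth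

lemma exists_proj_mul_proj_mul_eq_left [DecidableEq n] {p q : Type*} [Fintype p] [Fintype q]
    {B : Matrix p q ℝ} {Bp : Matrix q p ℝ} (hA : IsMPInv A Ap) (hB : IsMPInv B Bp)
    {G : Matrix m p ℝ} {Si : Matrix q n ℝ} (h : Aᵀ * G * B * Si = 1) :
    ∃ Z : Matrix p n ℝ, A * Ap * G * (B * Bp) * Z = A := by
  have hAA : A * Ap = Apᵀ * Aᵀ := by rw [← hA.2.2.1, transpose_mul]
  refine ⟨B * Si * Aᵀ * A, ?_⟩
  calc A * Ap * G * (B * Bp) * (B * Si * Aᵀ * A)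
      = Apᵀ * (Aᵀ * G * (B * Bp * B) * Si) * Aᵀ * A := by
        rw [hAA]; simp only [Matrix.mul_assoc]
    _ = A * Ap * A := by rw [hB.1, h, Matrix.mul_one, hAA]
    _ = A := hA.1

end IsMPInv

lemma eq_mul_mul_transpose_and_mulVec_pinv_eq_neg_vec {a b k l n : Type*} [Fintype a] [Fintype b]
    [Fintype k] [Fintype l] [Fintype n] [DecidableEq k] [DecidableEq l] {A A' : Matrix a k ℝ}
    {B B' : Matrix b l ℝ} (hA : A'ᵀ * A = 1) (hB : B'ᵀ * B = 1) {J : Matrix n (a × b) ℝ}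
    (hJ : Jᵀ * J = (A ⊗ₖ B) * (A ⊗ₖ B)ᵀ) {Jp : Matrix (a × b) n ℝ} (hJp : IsMPInv J Jp)
    {z : n → ℝ} {G : Matrix b a ℝ} (hG : vec G = -(Jᵀ *ᵥ z)) {F : Matrix l k ℝ}
    (hF : F = B'ᵀ * G * A') :
    G = B * F * Aᵀ ∧ (A ⊗ₖ B)ᵀ *ᵥ (Jp *ᵥ z) = -vec F := by
  set y := (A ⊗ₖ B)ᵀ *ᵥ (Jp *ᵥ z)
  set Y : Matrix l k ℝ := of fun i j => y (j, i)
  have hGY : G = -(B * Y * Aᵀ) := by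
    rw [← vec_inj, hG, vec_neg, ← kronecker_mulVec_vec, ← hJp.transpose_mul_self_mul, hJ]
    simp only [← mulVec_mulVec]
    rfl
  have hAA : Aᵀ * A' = 1 := by simpa using congrArg transpose hA
  have hFY : F = -Y := by
    rw [hF, hGY]
    simp only [Matrix.mul_neg, Matrix.neg_mul, Matrix.mul_assoc, hAA, Matrix.mul_one]
    rw [← Matrix.mul_assoc, hB, Matrix.one_mul]
  rw [hFY, vec_neg, neg_neg]
  exact ⟨by simpa [Matrix.mul_neg, Matrix.neg_mul] using hGY, rfl⟩

section RootFactor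

variable {m k l : Type*} [Fintype k] [DecidableEq k]

noncomputable def rootFactor (U : Matrix m k ℝ) (d : k → ℝ) : Matrix m k ℝ :=
  U * diagonal fun i => √(d i)

noncomputable def invRootFactor (U : Matrix m k ℝ) (d : k → ℝ) : Matrix m k ℝ :=
  U * diagonal fun i => (√(d i))⁻¹

lemma rootFactor_mul_transpose (U : Matrix m k ℝ) {d : k → ℝ} (hd : ∀ i, 0 ≤ d i) :
    rootFactor U d * (rootFactor U d)ᵀ = U * diagonal d * Uᵀ := by
  rw [rootFactor, transpose_mul, diagonal_transpose, Matrix.mul_assoc,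
    ← Matrix.mul_assoc (diagonal _), diagonal_mul_diagonal, ← Matrix.mul_assoc]
  simp_rw [Real.mul_self_sqrt (hd _)]

variable [Fintype m] {U : Matrix m k ℝ} {d : k → ℝ}

lemma transpose_mul_diagonal_mul_mul_diagonal (hU : Uᵀ * U = 1) {e e' : k → ℝ}
    (he : ∀ i, e' i * e i = 1) : (U * diagonal e')ᵀ * (U * diagonal e) = 1 := by
  rw [transpose_mul, diagonal_transpose, Matrix.mul_assoc, ← Matrix.mul_assoc Uᵀ, hU,
    Matrix.one_mul, diagonal_mul_diagonal]
  simp [he]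

lemma invRootFactor_transpose_mul_rootFactor (hU : Uᵀ * U = 1) (hd : ∀ i, 0 < d i) :
    (invRootFactor U d)ᵀ * rootFactor U d = 1 :=
  transpose_mul_diagonal_mul_mul_diagonal hU fun i => inv_mul_cancel₀ (Real.sqrt_pos.2 (hd i)).ne'

lemma rootFactor_transpose_mul_invRootFactor (hU : Uᵀ * U = 1) (hd : ∀ i, 0 < d i) :
    (rootFactor U d)ᵀ * invRootFactor U d = 1 :=
  transpose_mul_diagonal_mul_mul_diagonal hU fun i => mul_inv_cancel₀ (Real.sqrt_pos.2 (hd i)).ne'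

lemma invRootFactor_transpose_mul_rootFactor_mul (hU : Uᵀ * U = 1) (hd : ∀ i, 0 < d i)
    (X : Matrix k l ℝ) : (invRootFactor U d)ᵀ * (rootFactor U d * X) = X := by
  rw [← Matrix.mul_assoc, invRootFactor_transpose_mul_rootFactor hU hd, Matrix.one_mul]

lemma rootFactor_transpose_mul_invRootFactor_mul (hU : Uᵀ * U = 1) (hd : ∀ i, 0 < d i)
    (X : Matrix k l ℝ) : (rootFactor U d)ᵀ * (invRootFactor U d * X) = X := by
  rw [← Matrix.mul_assoc, rootFactor_transpose_mul_invRootFactor hU hd, Matrix.one_mul]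

lemma kronecker_rootFactor_transpose_mulVec_vec {a b p q : Type*} [Fintype a] [Fintype b]
    [Fintype p] [Fintype q] [DecidableEq p] [DecidableEq q] {US : Matrix a p ℝ}
    {UT : Matrix b q ℝ} {dS : p → ℝ} {dT : q → ℝ} (hUS : USᵀ * US = 1) (hdS : ∀ i, 0 < dS i)
    (hUT : UTᵀ * UT = 1) (hdT : ∀ i, 0 < dT i) (X : Matrix q p ℝ) :
    (rootFactor US dS ⊗ₖ rootFactor UT dT)ᵀ
        *ᵥ vec (invRootFactor UT dT * X * (invRootFactor US dS)ᵀ) = vec X := by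
  rw [← kroneckerMap_transpose, kronecker_mulVec_vec, transpose_transpose]
  simp only [Matrix.mul_assoc, rootFactor_transpose_mul_invRootFactor_mul hUT hdT,
    invRootFactor_transpose_mul_rootFactor hUS hdS, Matrix.mul_one]

lemma invRootFactor_mul_transpose_mul_mul {a b p q r t : Type*} [Fintype a] [Fintype b]
    [Fintype p] [Fintype q] [DecidableEq p] [DecidableEq q] {US : Matrix a p ℝ}
    {UT : Matrix b q ℝ} {dS : p → ℝ} {dT : q → ℝ} (hUS : USᵀ * US = 1) (hdS : ∀ i, 0 < dS i)
    (hUT : UTᵀ * UT = 1) (hdT : ∀ i, 0 < dT i) (P : Matrix q r ℝ) (F : Matrix q p ℝ)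
    (Q : Matrix p t ℝ) :
    (invRootFactor UT dT * P)ᵀ * (rootFactor UT dT * F * (rootFactor US dS)ᵀ)
        * (invRootFactor US dS * Q) = Pᵀ * F * Q := by
  simp only [transpose_mul, Matrix.mul_assoc, invRootFactor_transpose_mul_rootFactor_mul hUT hdT,
    rootFactor_transpose_mul_invRootFactor_mul hUS hdS]

end RootFactor

def rectDiagonal (m n : ℕ) (s : ℕ → ℝ) : Matrix (Fin m) (Fin n) ℝ :=
  of fun i j => if (i : ℕ) = j then s i else 0

section RectDiagonal

variable {m n p q r : ℕ}

lemma rectDiagonal_sub (s t : ℕ → ℝ) :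
    rectDiagonal m n s - rectDiagonal m n t = rectDiagonal m n (s - t) := by
  ext i j
  by_cases h : (i : ℕ) = j <;> simp [rectDiagonal, h]

lemma euclidNorm_vec_rectDiagonal (s : ℕ → ℝ) :
    euclidNorm (vec (rectDiagonal m n s)) = √(∑ i ∈ Finset.range (min m n), s i ^ 2) := by
  rw [euclidNorm, Fintype.sum_prod_type, Finset.sum_comm]
  congr 1
  simp only [vec, rectDiagonal, of_apply, ite_pow, ne_eq, OfNat.ofNat_ne_zero,
    not_false_eq_true, zero_pow]
  have hrow : ∀ i : ℕ, ∑ j : Fin n, (if i = j then s i ^ 2 else 0)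
      = if i ∈ Finset.range n then s i ^ 2 else 0 := fun i => by
    rw [Fin.sum_univ_eq_sum_range (fun j => if i = j then s i ^ 2 else 0) n, Finset.sum_ite_eq]
  simp_rw [hrow]
  rw [Fin.sum_univ_eq_sum_range (fun i => if i ∈ Finset.range n then s i ^ 2 else 0) m,
    Finset.sum_ite_mem, Finset.range_inter_range]

lemma submatrix_castLE_transpose_mul_mul_submatrix_castLE
    {U : Matrix (Fin p) (Fin p) ℝ} {V : Matrix (Fin q) (Fin q) ℝ} (hU : Uᵀ * U = 1)
    (hV : Vᵀ * V = 1) (hp : r ≤ p) (hq : r ≤ q) (s : ℕ → ℝ) :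
    (U.submatrix id (Fin.castLE hp))ᵀ * (U * rectDiagonal p q s * Vᵀ)
        * V.submatrix id (Fin.castLE hq) = diagonal fun i : Fin r => s i := by
  change (Uᵀ * (U * rectDiagonal p q s * Vᵀ) * V).submatrix (Fin.castLE hp) (Fin.castLE hq) = _
  rw [← Matrix.mul_assoc, ← Matrix.mul_assoc, hU, Matrix.one_mul, Matrix.mul_assoc, hV,
    Matrix.mul_one]
  ext i j
  simp [rectDiagonal, diagonal_apply, Fin.ext_iff]

lemma submatrix_castLE_mul_diagonal_mul_transpose (hp : r ≤ p) (hq : r ≤ q)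
    (U : Matrix (Fin m) (Fin p) ℝ) (V : Matrix (Fin n) (Fin q) ℝ) (s : ℕ → ℝ) :
    U.submatrix id (Fin.castLE hp) * diagonal (fun i : Fin r => s i)
        * (V.submatrix id (Fin.castLE hq))ᵀ
      = U * rectDiagonal p q (fun i => if i < r then s i else 0) * Vᵀ := by
  have hE : ∀ {k l : ℕ} (h : r ≤ l) (A : Matrix (Fin k) (Fin l) ℝ),
      A.submatrix id (Fin.castLE h)
        = A * (1 : Matrix (Fin l) (Fin l) ℝ).submatrix id (Fin.castLE h) :=
    fun h A => by simpa using (mul_submatrix_one (Equiv.refl _) (Fin.castLE h) A).symm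
  have hmid : (1 : Matrix (Fin p) (Fin p) ℝ).submatrix id (Fin.castLE hp)
      * diagonal (fun i : Fin r => s i)
      * ((1 : Matrix (Fin q) (Fin q) ℝ).submatrix id (Fin.castLE hq))ᵀ
      = rectDiagonal p q (fun i => if i < r then s i else 0) := by
    ext i j
    rw [mul_apply]
    simp only [mul_diagonal, transpose_apply, submatrix_apply, id, one_apply,
      Fin.ext_iff, Fin.val_castLE]
    rw [Fin.sum_univ_eq_sum_range (fun x => (if (i : ℕ) = x then 1 else 0) * s x
      * (if (j : ℕ) = x then 1 else 0)) r]
    simp only [ite_mul, one_mul, zero_mul, Finset.sum_ite_eq, Finset.mem_range, rectDiagonal,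
      of_apply]
    split_ifs <;> first | omega | simp
  rw [hE hp U, hE hq V, ← hmid, transpose_mul]
  simp only [Matrix.mul_assoc]

end RectDiagonal

lemma sum_range_sq_sub_ite_lt (s : ℕ → ℝ) (r k : ℕ) :
    ∑ i ∈ Finset.range k, (s - fun i => if i < r then s i else 0) i ^ 2
      = ∑ i ∈ Finset.Ico r k, s i ^ 2 := by
  have hterm : ∀ i, (s - fun i => if i < r then s i else 0) i ^ 2
      = if r ≤ i then s i ^ 2 else 0 := fun i => by
    simp only [Pi.sub_apply]
    split_ifs <;> first | omega | simp
  simp_rw [hterm]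
  rw [← Finset.sum_filter, Finset.range_eq_Ico, Finset.Ico_filter_le, Nat.zero_max]

lemma rank_mul_diagonal_mul_transpose {m n k : Type*} [Fintype m] [Fintype n] [Fintype k]
    [DecidableEq k] {U : Matrix m k ℝ} {V : Matrix n k ℝ} (hU : Uᵀ * U = 1) (hV : Vᵀ * V = 1)
    {d : k → ℝ} (hd : ∀ i, d i ≠ 0) :
    (U * diagonal d * Vᵀ).rank = Fintype.card k := by
  classical
  refine le_antisymm
    ((rank_mul_le_left _ _).trans ((rank_mul_le_left _ _).trans (rank_le_card_width _))) ?_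
  calc Fintype.card k = (diagonal d).rank := by simp [rank_diagonal, hd]
    _ = (Uᵀ * (U * diagonal d * Vᵀ) * V).rank := by
        simp only [← Matrix.mul_assoc, hU, Matrix.one_mul]
        rw [Matrix.mul_assoc, hV, Matrix.mul_one]
    _ ≤ (Uᵀ * (U * diagonal d * Vᵀ)).rank := rank_mul_le_left _ _
    _ ≤ _ := rank_mul_le_right _ _

lemma exists_smul_mul_diagonal_mul_eq {m k l : Type*} [Fintype k] [DecidableEq k]
    (U : Matrix m k ℝ) {c : ℝ} (hc : c ≠ 0) {e : k → ℝ} (he : ∀ i, e i ≠ 0) (Y : Matrix k l ℝ) :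
    ∃ A : Matrix k l ℝ, c • (U * diagonal e) * A = U * Y := by
  refine ⟨c⁻¹ • (diagonal (fun i => (e i)⁻¹) * Y), ?_⟩
  rw [Matrix.smul_mul, Matrix.mul_smul, smul_smul, mul_inv_cancel₀ hc, one_smul, Matrix.mul_assoc,
    ← Matrix.mul_assoc (diagonal e), diagonal_mul_diagonal]
  simp [he]

lemma exists_cgInit_mul_eq {m n r k : ℕ} {γ : ℝ} (hγ : 0 < γ) {L : Matrix (Fin m) (Fin r) ℝ}
    {Lp : Matrix (Fin r) (Fin m) ℝ} {R : Matrix (Fin n) (Fin r) ℝ} {Rp : Matrix (Fin r) (Fin n) ℝ}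
    (hLp : IsMPInv L Lp) (hRp : IsMPInv R Rp) {G : Matrix (Fin m) (Fin n) ℝ} {σ : Fin r → ℝ}
    (hσ : ∀ i, σ i ≠ 0) (hLGR : Lᵀ * G * R = diagonal σ)
    {M : Matrix (Fin m) (Fin n) ℝ} (hM : M = -(L * Lp * G * (R * Rp))) (hMne : M ≠ 0)
    (hkM : r ≤ k) {UM : Matrix (Fin m) (Fin k) ℝ} {VM : Matrix (Fin n) (Fin k) ℝ}
    {dM : Fin k → ℝ} (hUM : UMᵀ * UM = 1) (hVM : VMᵀ * VM = 1) (hdM : ∀ i, 0 < dM i)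
    (hMsvd : M = UM * diagonal dM * VMᵀ) {B₀ : Matrix (Fin m) (Fin r) ℝ}
    (hB₀ : B₀ = ((m : ℝ) ^ ((1 : ℝ) / 4) / (γ * √(specNorm M)))
      • (UM.submatrix id (Fin.castLE hkM) * diagonal fun i : Fin r => √(dM (Fin.castLE hkM i))))
    (Y : Matrix (Fin r) (Fin n) ℝ) :
    ∃ A : Matrix (Fin r) (Fin n) ℝ, B₀ * A = L * Y := by
  have hkr : k = r := by
    refine le_antisymm ?_ hkM
    calc k = M.rank := by
          rw [hMsvd, rank_mul_diagonal_mul_transpose hUM hVM fun i => (hdM i).ne',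
            Fintype.card_fin]
      _ = (L * -(Lp * G * (R * Rp))).rank := by
          rw [hM, Matrix.mul_neg]; simp only [Matrix.mul_assoc]
      _ ≤ r := (rank_mul_le_left _ _).trans (rank_le_width L)
  subst hkr
  have hc : (m : ℝ) ^ ((1 : ℝ) / 4) / (γ * √(specNorm M)) ≠ 0 := by
    have : m ≠ 0 := by rintro rfl; exact hMne (Subsingleton.elim _ _)
    have := specNorm_pos hMne
    positivity
  obtain ⟨Z, hZ⟩ := hLp.exists_proj_mul_proj_mul_eq_left hRp
    (Si := diagonal fun i => (σ i)⁻¹) (by rw [hLGR, diagonal_mul_diagonal]; simp [hσ])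
  obtain ⟨A, hA⟩ := exists_smul_mul_diagonal_mul_eq UM hc
    (fun i => (Real.sqrt_pos.2 (hdM i)).ne') (diagonal dM * VMᵀ * (-Z * Y))
  refine ⟨A, ?_⟩
  simp only [hB₀, Fin.castLE_rfl, submatrix_id_id, id]
  rw [hA, ← hZ, ← neg_neg (L * Lp * G * (R * Rp)), ← hM, hMsvd]
  simp only [Matrix.mul_assoc, Matrix.neg_mul, Matrix.mul_neg]

theorem cg_lora_squared_loss_general {n din dout rs rt r : ℕ}
    (hrt : r ≤ rt) (hrs : r ≤ rs) (γ : ℝ) (hγ : 0 < γ)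
    (J : Matrix (Fin n) (Fin din × Fin dout) ℝ)
    (S : Matrix (Fin din) (Fin din) ℝ) (T : Matrix (Fin dout) (Fin dout) ℝ)
    (US : Matrix (Fin din) (Fin rs) ℝ) (UT : Matrix (Fin dout) (Fin rt) ℝ)
    (dS : Fin rs → ℝ) (dT : Fin rt → ℝ)
    (hUS : USᵀ * US = 1) (hUT : UTᵀ * UT = 1)
    (hdS : ∀ i, 0 < dS i) (hdT : ∀ i, 0 < dT i)
    (hS : S = US * diagonal dS * USᵀ) (hT : T = UT * diagonal dT * UTᵀ)
    (hkfac : Jᵀ * J = S ⊗ₖ T)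
    (z : Fin n → ℝ)
    (G : Matrix (Fin dout) (Fin din) ℝ)
    (hG : ∀ (i : Fin dout) (j : Fin din), G i j = -(Jᵀ.mulVec z) (j, i))
    (F : Matrix (Fin rt) (Fin rs) ℝ)
    (hF : F = diagonal (fun i => (Real.sqrt (dT i))⁻¹) * UTᵀ * G
              * US * diagonal (fun i => (Real.sqrt (dS i))⁻¹))
    -- a full SVD of `F` with ordered singular values `s`; `rank F ≥ r`, i.e. `s_r(F) > 0`
    (UF : Matrix (Fin rt) (Fin rt) ℝ) (VF : Matrix (Fin rs) (Fin rs) ℝ)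
    (s : ℕ → ℝ)
    (hUF : UFᵀ * UF = 1) (hVF : VFᵀ * VF = 1)
    (hs_top : ∀ i, i < r → 0 < s i)
    (hFsvd : F = UF * (Matrix.of fun (i : Fin rt) (j : Fin rs) =>
                  if (i : ℕ) = (j : ℕ) then s i else 0) * VFᵀ)
    -- the CG-LoRA left/right modes and their Moore–Penrose pseudoinverses
    (L : Matrix (Fin dout) (Fin r) ℝ)
    (hL : L = UT * diagonal (fun i => (Real.sqrt (dT i))⁻¹) * UF.submatrix id (Fin.castLE hrt))
    (R : Matrix (Fin din) (Fin r) ℝ)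
    (hR : R = US * diagonal (fun i => (Real.sqrt (dS i))⁻¹) * VF.submatrix id (Fin.castLE hrs))
    (Lp : Matrix (Fin r) (Fin dout) ℝ) (hLp : IsMPInv L Lp)
    (Rp : Matrix (Fin r) (Fin din) ℝ) (hRp : IsMPInv R Rp)
    -- `M = −Π_{L_r} G Π_{R_r} ≠ 0` with any thin SVD `M = U_M D_M V_Mᵀ`
    (M : Matrix (Fin dout) (Fin din) ℝ)
    (hM : M = -((L * Lp) * G * (R * Rp))) (hMne : M ≠ 0)
    (kM : ℕ) (hkM : r ≤ kM)
    (UM : Matrix (Fin dout) (Fin kM) ℝ) (VM : Matrix (Fin din) (Fin kM) ℝ)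
    (dM : Fin kM → ℝ)
    (hUM : UMᵀ * UM = 1) (hVM : VMᵀ * VM = 1)
    (hdM_pos : ∀ i, 0 < dM i)
    (hMsvd : M = UM * diagonal dM * VMᵀ)
    -- the CG-LoRA initialization
    (A₀ : Matrix (Fin r) (Fin din) ℝ) (B₀ : Matrix (Fin dout) (Fin r) ℝ)
    (hB₀ : B₀ = ((dout : ℝ) ^ ((1 : ℝ)/4) / (γ * Real.sqrt (specNorm M)))
              • (UM.submatrix id (Fin.castLE hkM)
                  * diagonal (fun i : Fin r => Real.sqrt (dM (Fin.castLE hkM i)))))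
    (H : Matrix (Fin din × Fin dout) ((Fin din × Fin r) ⊕ (Fin r × Fin dout)) ℝ)
    (hH : H = fromCols ((1 : Matrix (Fin din) (Fin din) ℝ) ⊗ₖ B₀)
                (A₀ᵀ ⊗ₖ (1 : Matrix (Fin dout) (Fin dout) ℝ)))
    (Jp : Matrix (Fin din × Fin dout) (Fin n) ℝ) (hJp : IsMPInv J Jp)
    (JHp : Matrix ((Fin din × Fin r) ⊕ (Fin r × Fin dout)) (Fin n) ℝ)
    (hJHp : IsMPInv (J * H) JHp) :
    euclidNorm ((J * Jp - (J * H) * JHp).mulVec z)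
      ≤ Real.sqrt (∑ i ∈ Finset.Ico r (min rt rs), s i ^ 2) := by
  set W := rootFactor US dS ⊗ₖ rootFactor UT dT
  have hJJ : Jᵀ * J = W * Wᵀ := by
    rw [hkfac, hS, hT, ← kroneckerMap_transpose, ← mul_kronecker_mul,
      rootFactor_mul_transpose US fun i => (hdS i).le,
      rootFactor_mul_transpose UT fun i => (hdT i).le]
  replace hF : F = (invRootFactor UT dT)ᵀ * G * invRootFactor US dS := by
    rw [hF, invRootFactor, invRootFactor, transpose_mul, diagonal_transpose]
    simp only [Matrix.mul_assoc]
  replace hL : L = invRootFactor UT dT * UF.submatrix id (Fin.castLE hrt) := hL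
  replace hR : R = invRootFactor US dS * VF.submatrix id (Fin.castLE hrs) := hR
  replace hFsvd : F = UF * rectDiagonal rt rs s * VFᵀ := hFsvd
  obtain ⟨hGF, hJpz⟩ := eq_mul_mul_transpose_and_mulVec_pinv_eq_neg_vec
    (invRootFactor_transpose_mul_rootFactor hUS hdS)
    (invRootFactor_transpose_mul_rootFactor hUT hdT) hJJ hJp (funext fun p => hG p.2 p.1) hF
  have hLGR : Lᵀ * G * R = diagonal fun i : Fin r => s i := by
    rw [hL, hR, hGF, invRootFactor_mul_transpose_mul_mul hUS hdS hUT hdT, hFsvd]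
    exact submatrix_castLE_transpose_mul_mul_submatrix_castLE hUF hVF hrt hrs s
  obtain ⟨A₁, hA₁⟩ := exists_cgInit_mul_eq hγ hLp hRp (fun i => (hs_top i i.is_lt).ne') hLGR
    hM hMne hkM hUM hVM hdM_pos hMsvd hB₀ (-(diagonal (fun i : Fin r => s i) * Rᵀ))
  set head : ℕ → ℝ := fun i => if i < r then s i else 0
  have hHu : H *ᵥ Sum.elim (vec A₁) 0
      = vec (invRootFactor UT dT * -(UF * rectDiagonal rt rs head * VFᵀ)
          * (invRootFactor US dS)ᵀ) := by
    rw [hH, fromCols_mulVec_sumElim, mulVec_zero, add_zero, ← vec_mul_eq_mulVec, hA₁, hL, hR,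
      ← submatrix_castLE_mul_diagonal_mul_transpose hrt hrs UF VF s]
    simp only [transpose_mul, Matrix.mul_neg, Matrix.neg_mul, Matrix.mul_assoc]
  calc euclidNorm ((J * Jp - J * H * JHp) *ᵥ z)
      ≤ euclidNorm (J *ᵥ (Jp *ᵥ z - H *ᵥ Sum.elim (vec A₁) 0)) :=
        hJp.euclidNorm_mulVec_sub_le hJHp z _
    _ = euclidNorm (-vec (UF * rectDiagonal rt rs (s - head) * VFᵀ)) := by
        rw [euclidNorm_mulVec_eq_of_transpose_mul_self_eq hJJ, mulVec_sub, hJpz, hHu,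
          kronecker_rootFactor_transpose_mulVec_vec hUS hdS hUT hdT, hFsvd, ← rectDiagonal_sub,
          Matrix.mul_sub, Matrix.sub_mul, vec_neg, vec_sub, sub_neg_eq_add, neg_add_eq_sub,
          neg_sub]
    _ = √(∑ i ∈ Finset.Ico r (min rt rs), s i ^ 2) := by
        rw [euclidNorm_neg, euclidNorm_vec_mul_mul_transpose hUF hVF, euclidNorm_vec_rectDiagonal,
          sum_range_sq_sub_ite_lt]

/-- Theorem (CG-LoRA, squared loss): under the K-FAC assumption, the curvature-guided
initialization built from the top-`r` modes of the whitened gradient `F` reduces the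
prediction alignment gap to the rank-`(r+1)` tail of the singular values of `F`:
`‖(JJ† − (JH)(JH)†)z‖₂ ≤ (Σ_{i ≥ r+1} s_i(F)²)^{1/2}`. -/
theorem cg_lora_squared_loss {n din dout rs rt r : ℕ}
    (hrt : r ≤ rt) (hrs : r ≤ rs) (γ : ℝ) (hγ : 0 < γ)
    (J : Matrix (Fin n) (Fin din × Fin dout) ℝ)
    (S : Matrix (Fin din) (Fin din) ℝ) (T : Matrix (Fin dout) (Fin dout) ℝ)
    (US : Matrix (Fin din) (Fin rs) ℝ) (UT : Matrix (Fin dout) (Fin rt) ℝ)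
    (dS : Fin rs → ℝ) (dT : Fin rt → ℝ)
    (hUS : USᵀ * US = 1) (hUT : UTᵀ * UT = 1)
    (hdS : ∀ i, 0 < dS i) (hdT : ∀ i, 0 < dT i)
    (hS : S = US * diagonal dS * USᵀ) (hT : T = UT * diagonal dT * UTᵀ)
    (hkfac : Jᵀ * J = S ⊗ₖ T)
    (z : Fin n → ℝ)
    (G : Matrix (Fin dout) (Fin din) ℝ)
    (hG : ∀ (i : Fin dout) (j : Fin din), G i j = -(Jᵀ.mulVec z) (j, i))
    (F : Matrix (Fin rt) (Fin rs) ℝ)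
    (hF : F = diagonal (fun i => (Real.sqrt (dT i))⁻¹) * UTᵀ * G
              * US * diagonal (fun i => (Real.sqrt (dS i))⁻¹))
    -- a full SVD of `F` with ordered singular values `s`; `rank F ≥ r`, i.e. `s_r(F) > 0`
    (UF : Matrix (Fin rt) (Fin rt) ℝ) (VF : Matrix (Fin rs) (Fin rs) ℝ)
    (s : ℕ → ℝ)
    (hUF : UFᵀ * UF = 1) (hVF : VFᵀ * VF = 1)
    (hs_anti : ∀ i j, i ≤ j → s j ≤ s i) (hs_nonneg : ∀ i, 0 ≤ s i)
    (hs_top : ∀ i, i < r → 0 < s i)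
    (hFsvd : F = UF * (Matrix.of fun (i : Fin rt) (j : Fin rs) =>
                  if (i : ℕ) = (j : ℕ) then s i else 0) * VFᵀ)
    -- the CG-LoRA left/right modes and their Moore–Penrose pseudoinverses
    (L : Matrix (Fin dout) (Fin r) ℝ)
    (hL : L = UT * diagonal (fun i => (Real.sqrt (dT i))⁻¹) * UF.submatrix id (Fin.castLE hrt))
    (R : Matrix (Fin din) (Fin r) ℝ)
    (hR : R = US * diagonal (fun i => (Real.sqrt (dS i))⁻¹) * VF.submatrix id (Fin.castLE hrs))
    (Lp : Matrix (Fin r) (Fin dout) ℝ) (hLp : IsMPInv L Lp)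
    (Rp : Matrix (Fin r) (Fin din) ℝ) (hRp : IsMPInv R Rp)
    -- `M = −Π_{L_r} G Π_{R_r} ≠ 0` with any thin SVD `M = U_M D_M V_Mᵀ`
    (M : Matrix (Fin dout) (Fin din) ℝ)
    (hM : M = -((L * Lp) * G * (R * Rp))) (hMne : M ≠ 0)
    (kM : ℕ) (hkM : r ≤ kM)
    (UM : Matrix (Fin dout) (Fin kM) ℝ) (VM : Matrix (Fin din) (Fin kM) ℝ)
    (dM : Fin kM → ℝ)
    (hUM : UMᵀ * UM = 1) (hVM : VMᵀ * VM = 1)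
    (hdM_pos : ∀ i, 0 < dM i) (hdM_anti : ∀ i j : Fin kM, i ≤ j → dM j ≤ dM i)
    (hMsvd : M = UM * diagonal dM * VMᵀ)
    -- the CG-LoRA initialization
    (A₀ : Matrix (Fin r) (Fin din) ℝ) (B₀ : Matrix (Fin dout) (Fin r) ℝ)
    (hA₀ : A₀ᵀ = ((dout : ℝ) ^ ((1 : ℝ)/4) / (γ * Real.sqrt (specNorm M)))
              • (VM.submatrix id (Fin.castLE hkM)
                  * diagonal (fun i : Fin r => Real.sqrt (dM (Fin.castLE hkM i)))))
    (hB₀ : B₀ = ((dout : ℝ) ^ ((1 : ℝ)/4) / (γ * Real.sqrt (specNorm M)))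
              • (UM.submatrix id (Fin.castLE hkM)
                  * diagonal (fun i : Fin r => Real.sqrt (dM (Fin.castLE hkM i)))))
    (H : Matrix (Fin din × Fin dout) ((Fin din × Fin r) ⊕ (Fin r × Fin dout)) ℝ)
    (hH : H = fromCols ((1 : Matrix (Fin din) (Fin din) ℝ) ⊗ₖ B₀)
                (A₀ᵀ ⊗ₖ (1 : Matrix (Fin dout) (Fin dout) ℝ)))
    (Jp : Matrix (Fin din × Fin dout) (Fin n) ℝ) (hJp : IsMPInv J Jp)
    (JHp : Matrix ((Fin din × Fin r) ⊕ (Fin r × Fin dout)) (Fin n) ℝ)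
    (hJHp : IsMPInv (J * H) JHp) :
    euclidNorm ((J * Jp - (J * H) * JHp).mulVec z)
      ≤ Real.sqrt (∑ i ∈ Finset.Ico r (min rt rs), s i ^ 2) :=
  cg_lora_squared_loss_general hrt hrs γ hγ J S T US UT dS dT hUS hUT hdS hdT hS hT hkfac z G hG F
    hF UF VF s hUF hVF hs_top hFsvd L hL R hR Lp hLp Rp hRp M hM hMne kM hkM UM VM dM hUM hVM
    hdM_pos hMsvd A₀ B₀ hB₀ H hH Jp hJp JHp hJHp
end
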